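/- Under a right decay of a braid, the effective twist is additively conserved: for all end-node states S_l, S_r ∈ {+1,−1}, all twist triples T, T' ∈ ℤ³, and all crossing sequences X, X', the braid B = (S_l, T, X++X', S_r) and its right-decay products B' = (S_l, T − σ_X⁻¹ • T', X, S') and B'' = (S', T', X', S_r), with S' = (−1)^{|X'|} S_r, satisfy Θ(B) = Θ(B') + Θ(B''). -/
import Mathlib

/-- A crossing generator: one of the four symbols `u`, `d`, `u⁻¹`, `d⁻¹`. -/
inductive CrossGen : Type
  | u : CrossGen
  | d : CrossGen
  | uInv : CrossGen
  | dInv : CrossGen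
deriving DecidableEq

/-- The crossing value: `+1` for `u` and `d`, `-1` for `u⁻¹` and `d⁻¹`. -/
def crossVal : CrossGen → ℤ
  | .u => 1
  | .d => 1
  | .uInv => -1
  | .dInv => -1

/-- The transposition of `{1,2,3}` induced by a crossing generator:
`u, u⁻¹ ↦ (1 2)` and `d, d⁻¹ ↦ (2 3)`. -/
def genPerm : CrossGen → Equiv.Perm (Fin 3)
  | .u => Equiv.swap 0 1
  | .uInv => Equiv.swap 0 1
  | .d => Equiv.swap 1 2
  | .dInv => Equiv.swap 1 2

/-- The permutation induced by a crossing sequence; the head of the list acts first. -/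
def seqPerm : List CrossGen → Equiv.Perm (Fin 3)
  | [] => 1
  | x :: xs => seqPerm xs * genPerm x

/-- The crossing number `c(X)`: the sum of the crossing values of the entries. -/
def crossSum (X : List CrossGen) : ℤ := (X.map crossVal).sum

/-- The action `σ • T` of a permutation of `{1,2,3}` on a twist triple `T ∈ ℤ³`,
permuting the entries. -/
def permAct (σ : Equiv.Perm (Fin 3)) (T : Fin 3 → ℤ) : Fin 3 → ℤ :=
  fun i => T (σ⁻¹ i)

/-- A braid (in unique representation): a quadruple `(S_l, T, X, S_r)` of a left
end-node state, an internal twist triple, a crossing sequence and a right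
end-node state. -/
structure Braid : Type where
  Sl : ℤ
  T : Fin 3 → ℤ
  X : List CrossGen
  Sr : ℤ

/-- The effective twist `Θ(B) = T₁ + T₂ + T₃ − 2 c(X)`. -/
def effTwist (B : Braid) : ℤ := B.T 0 + B.T 1 + B.T 2 - 2 * crossSum B.X

/-- The effective state `χ(B) = (−1)^{|X|} S_l S_r`. -/
def effState (B : Braid) : ℤ := (-1) ^ B.X.length * B.Sl * B.Sr

theorem sum_permAct (σ : Equiv.Perm (Fin 3)) (T : Fin 3 → ℤ) :
    permAct σ T 0 + permAct σ T 1 + permAct σ T 2 = T 0 + T 1 + T 2 := by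
  have h := Equiv.sum_comp σ⁻¹ T
  simpa [Fin.sum_univ_three, permAct, add_assoc] using h

/-- Under a right decay, the effective twist is additively conserved. -/
theorem effTwist_conserved_right_decay
    (Sl Sr : ℤ) (hSl : Sl = 1 ∨ Sl = -1) (hSr : Sr = 1 ∨ Sr = -1)
    (T T' : Fin 3 → ℤ) (X X' : List CrossGen) :
    effTwist ⟨Sl, T, X ++ X', Sr⟩
      = effTwist ⟨Sl, T - permAct (seqPerm X)⁻¹ T', X, (-1) ^ X'.length * Sr⟩
        + effTwist ⟨(-1) ^ X'.length * Sr, T', X', Sr⟩ := by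
  have h := sum_permAct (seqPerm X)⁻¹ T'
  simp only [effTwist, crossSum, List.map_append, List.sum_append, Pi.sub_apply]
  linarith
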